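/- arXiv:2001.04112 — 2 statements merged into one kernel-verified Lean document; each statement's English description precedes it below -/
import Mathlib

section
/- For every partition λ = (λ_1,…,λ_l), the polynomial S_λ = det(H_{λ_i+j-i}) is the coefficient of t_1^{λ_1}⋯t_l^{λ_l} in ∏_{i<j}(1 - t_j/t_i) · ∏_{r=1}^l ∏_{i≥1} (1-t_r^i)^{-X_i}. -/
open MvPolynomial

/-- The polynomial multichoose `C(p + j - 1, j) = p(p+1)⋯(p+j-1)/j!`. -/
noncomputable def polyMultichoose (p : MvPolynomial ℕ ℚ) (j : ℕ) : MvPolynomial ℕ ℚ :=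
  (j.factorial : ℚ)⁻¹ • ∏ k ∈ Finset.range j, (p + (k : MvPolynomial ℕ ℚ))

/-- The power series `(1 - t^i)^{-Xᵢ} = ∑_j multichoose(Xᵢ, j) t^{ij}` over `ℚ[X₁,X₂,…]`. -/
noncomputable def Hfactor (i : ℕ) : PowerSeries (MvPolynomial ℕ ℚ) :=
  PowerSeries.mk fun m => if i ∣ m then polyMultichoose (X i) (m / i) else 0

/-- `H_d`, defined by `∑_d H_d t^d = ∏_{i ≥ 1} (1 - t^i)^{-Xᵢ}`. -/
noncomputable def Hpoly (d : ℕ) : MvPolynomial ℕ ℚ :=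
  PowerSeries.coeff d (∏ i ∈ Finset.Icc 1 d, Hfactor i)

/-- `H` extended to integer indices by `H_k = 0` for `k < 0`. -/
noncomputable def Hz (k : ℤ) : MvPolynomial ℕ ℚ :=
  if 0 ≤ k then Hpoly k.toNat else 0

/-- The series `∑_d H_d t_r^d = ∏_{i ≥ 1}(1 - t_r^i)^{-Xᵢ}` in the variable `t_r`, viewed as
a multivariate power series in `t_1,…,t_l` over `ℚ[X₁,X₂,…]`. -/
noncomputable def Hser (l : ℕ) (r : Fin l) : MvPowerSeries (Fin l) (MvPolynomial ℕ ℚ) :=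
  fun e => if e = Finsupp.single r (e r) then Hpoly (e r) else 0

/-!
The factor `∏_{i<j} (t_i - t_j)` is the Vandermonde determinant `det (t_i ^ (l - 1 - j))`.
Expanding it over permutations `σ`, each term is a monomial `∏_i t_i ^ (l - 1 - σ i)`, and since
the `r`-th factor `∑_d H_d t_r^d` involves only `t_r`, the coefficient of
`∏_i t_i ^ (λ_i + l - 1 - i)` in that monomial times `∏_r ∑_d H_d t_r^d` is `∏_i H_{λ_i + σ i - i}`:
the `σ`-term of the Leibniz expansion of `det (H_{λ_i + j - i})`.
-/

open Finset Matrix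

theorem Hz_natCast_sub (m n : ℕ) : Hz ((m : ℤ) - n) = if n ≤ m then Hpoly (m - n) else 0 := by
  unfold Hz
  split_ifs
  · congr 1; omega
  all_goals first | rfl | omega

theorem Matrix.det_projVandermonde_one {R : Type*} [CommRing R] {n : ℕ} (x : Fin n → R) :
    (projVandermonde 1 x).det
      = ∏ p ∈ univ.filter (fun p : Fin n × Fin n => p.1 < p.2), (x p.1 - x p.2) := by
  rw [det_projVandermonde, prod_filter, Fintype.prod_prod_type]
  refine prod_congr rfl fun i _ => ?_
  rw [prod_ite, prod_const_one, mul_one]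
  exact prod_congr (by ext j; simp) fun j _ => by simp

namespace MvPowerSeries

theorem coeff_prod_of_coeff_eq_zero_off_axis {σ R : Type*} [Fintype σ] [DecidableEq σ]
    [CommSemiring R] (f : σ → MvPowerSeries σ R)
    (hf : ∀ k m, m ≠ Finsupp.single k (m k) → coeff m (f k) = 0) (e : σ →₀ ℕ) :
    coeff e (∏ k, f k) = ∏ k, coeff (Finsupp.single k (e k)) (f k) := by
  rw [coeff_prod]
  let axes : σ →₀ σ →₀ ℕ := Finsupp.equivFunOnFinite.symm fun k => Finsupp.single k (e k)
  have haxes : axes ∈ finsuppAntidiag univ e := by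
    rw [mem_finsuppAntidiag]
    refine ⟨Finsupp.ext fun j => ?_, subset_univ _⟩
    simp [axes]
  rw [sum_eq_single_of_mem axes haxes]
  · rfl
  intro L hL hne
  obtain ⟨k, hk⟩ : ∃ k, L k ≠ Finsupp.single k (L k k) := by
    by_contra! hsingle
    refine hne (Finsupp.ext fun k => ?_)
    have hdiag : L k k = e k := by
      rw [← (mem_finsuppAntidiag.1 hL).1, Finset.sum_apply', sum_eq_single k]
      · intro j _ hjk
        rw [hsingle j, Finsupp.single_eq_of_ne hjk.symm]
      · simp
    rw [hsingle k, hdiag]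
    rfl
  exact prod_eq_zero (mem_univ k) (hf k _ hk)

end MvPowerSeries

theorem coeff_Hser (l : ℕ) (k : Fin l) (m : Fin l →₀ ℕ) :
    MvPowerSeries.coeff m (Hser l k)
      = if m = Finsupp.single k (m k) then Hpoly (m k) else 0 := rfl

theorem coeff_X_pow_mul_Hser (l : ℕ) (k : Fin l) (b : ℕ) (m : Fin l →₀ ℕ) :
    MvPowerSeries.coeff m (MvPowerSeries.X k ^ b * Hser l k)
      = if m = Finsupp.single k (m k) then Hz ((m k : ℤ) - b) else 0 := by
  rw [MvPowerSeries.X_pow_eq, MvPowerSeries.coeff_monomial_mul, one_mul]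
  by_cases hm : m = Finsupp.single k (m k)
  · rw [if_pos hm, Hz_natCast_sub]
    obtain ⟨n, rfl⟩ : ∃ n, m = Finsupp.single k n := ⟨_, hm⟩
    simp only [Finsupp.single_le_iff, Finsupp.single_eq_same, ← Finsupp.single_tsub]
    split_ifs <;> simp [coeff_Hser]
  · rw [if_neg hm]
    split_ifs with hle
    · rw [coeff_Hser, if_neg]
      intro hsub
      refine hm ?_
      rw [← tsub_add_cancel_of_le hle, hsub, ← Finsupp.single_add]
      simp
    · rfl

theorem coeff_prod_X_pow_mul_Hser (l : ℕ) (b : Fin l → ℕ) (e : Fin l →₀ ℕ) :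
    MvPowerSeries.coeff e (∏ k, MvPowerSeries.X k ^ b k * Hser l k)
      = ∏ k, Hz ((e k : ℤ) - b k) := by
  rw [MvPowerSeries.coeff_prod_of_coeff_eq_zero_off_axis _
    (fun k m hm => by rw [coeff_X_pow_mul_Hser, if_neg hm])]
  simp [coeff_X_pow_mul_Hser]

/-- Clearing denominators, `∏_{i<j} (1 - t_j/t_i) = ∏_{i<j} (t_i - t_j) / ∏_i t_i^{l-1-i}`
(0-indexed), so the coefficient of `t^λ` is read off at the exponent `λ_r + (l - 1 - r)`. -/
theorem Weyl_character_polynomial_generating_function_general (l : ℕ) (lam : Fin l → ℕ) :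
    Matrix.det (Matrix.of fun i j : Fin l => Hz ((lam i : ℤ) + (j : ℤ) - (i : ℤ)))
      = MvPowerSeries.coeff
          (Finsupp.equivFunOnFinite.symm fun r : Fin l => lam r + (l - 1 - (r : ℕ)))
          ((∏ p ∈ Finset.univ.filter (fun p : Fin l × Fin l => p.1 < p.2),
              (MvPowerSeries.X p.1 - MvPowerSeries.X p.2)) *
            ∏ r : Fin l, Hser l r) := by
  rw [← det_projVandermonde_one, ← det_transpose (projVandermonde _ _),
    ← det_transpose (of _), det_apply, det_apply, sum_mul, map_sum]
  refine sum_congr rfl fun σ _ => ?_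
  rw [Units.smul_def, Units.smul_def, smul_mul_assoc, map_zsmul, ← prod_mul_distrib]
  simp only [transpose_apply, of_apply, projVandermonde_apply, Pi.one_apply, one_pow, one_mul]
  rw [coeff_prod_X_pow_mul_Hser]
  congr 1
  refine prod_congr rfl fun i _ => congrArg Hz ?_
  simp only [Finsupp.coe_equivFunOnFinite_symm, Fin.val_rev]
  have hσi := (σ i).isLt
  have hi := i.isLt
  push_cast
  omega

/-- The character polynomial `S_λ = det(H_{λᵢ+j-i})` of the Weyl module `W_λ` is the
coefficient of `t₁^{λ₁}⋯t_l^{λ_l}` in `∏_{i<j}(1 - t_j/t_i)·∏_{r=1}^l ∏_{i≥1}(1-t_r^i)^{-Xᵢ}`.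
Clearing denominators (`∏_{i<j}(1-t_j/t_i) = ∏_{i<j}(t_i-t_j)/∏_i t_i^{l-i}`), this says that
`S_λ` is the coefficient of `∏_r t_r^{λ_r + l - r}` (1-indexed) in
`∏_{i<j}(t_i - t_j) · ∏_r ∑_d H_d t_r^d`. -/
theorem Weyl_character_polynomial_generating_function (l : ℕ) (lam : Fin l → ℕ)
    (hpos : ∀ i, 0 < lam i) (hmono : ∀ i j : Fin l, i ≤ j → lam j ≤ lam i) :
    Matrix.det (Matrix.of fun i j : Fin l => Hz ((lam i : ℤ) + (j : ℤ) - (i : ℤ)))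
      = MvPowerSeries.coeff
          (Finsupp.equivFunOnFinite.symm fun r : Fin l => lam r + (l - 1 - (r : ℕ)))
          ((∏ p ∈ Finset.univ.filter (fun p : Fin l × Fin l => p.1 < p.2),
              (MvPowerSeries.X p.1 - MvPowerSeries.X p.2)) *
            ∏ r : Fin l, Hser l r) :=
  Weyl_character_polynomial_generating_function_general l lam
end

section
/- If k ≥ l ≥ 1, both k and l are odd, and (k,l) ≠ (1,1), then p_3(k,l) > p_3(k+1, l-1), where p_3(a,b) is the number of vector partitions of (a,b) into exactly 3 nonzero parts in Z_{≥0}^2. -/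
/-!
Sorting ordered triples of nonzero vectors with sum `w` by their underlying multisets, each
multiset `{x, y, z}` is hit by its `6 / |Stab|` rearrangements; weighting the triples with
`t.1 = t.2.1` by 3 and the constant ones by 2 makes every multiset count exactly 6 (Burnside for
`S₃` acting on positions). Hence `6 p₃(w) = A + 3B + 2C`, where `A` counts ordered triples, `B` those
with equal first two entries and `C ≤ 1` the constant ones. Fixing the first vector reduces `A` to
counting pairs, which gives `A = C(k+2,2) C(l+2,2) - 3(k+1)(l+1) + 3`, and `B` counts the nonzero
lattice points `x` with `2x < w`. For odd `l ≤ k` the step `(k, l) ↦ (k+1, l-1)` lowers `A` by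
`(k-l+1)((k+2)(l+1)/2 - 3)`, which beats the gain `3(l-1)/2` in `3B` and the at most 2 from `2C`.
-/

/-- `p_m(k,l)`: the number of vector partitions of `(k,l) ∈ ℤ_{≥0}²` into exactly `m`
nonzero parts. -/
noncomputable def vectorPartitions2 (m k l : ℕ) : ℕ :=
  Nat.card {M : Multiset (ℕ × ℕ) //
    Multiset.card M = m ∧ (∀ x ∈ M, x ≠ 0) ∧ M.sum = (k, l)}

open Finset

section OrbitCounting

variable {α : Type*}

def tripleMultiset (t : α × α × α) : Multiset α := {t.1, t.2.1, t.2.2}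

variable [DecidableEq α]

/-- Listed in the order of `List.permutations`, so that `tripleMultiset_eq_iff` is a `simp`
computation. -/
def tripleRearrangements (t : α × α × α) : Finset (α × α × α) :=
  {(t.1, t.2.1, t.2.2), (t.2.1, t.1, t.2.2), (t.2.2, t.2.1, t.1),
    (t.2.1, t.2.2, t.1), (t.2.2, t.1, t.2.1), (t.1, t.2.2, t.2.1)}

theorem tripleMultiset_eq_iff {s t : α × α × α} :
    tripleMultiset s = tripleMultiset t ↔ s ∈ tripleRearrangements t := by
  obtain ⟨x, y, z⟩ := s
  obtain ⟨a, b, c⟩ := t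
  have hperm : tripleMultiset (x, y, z) = tripleMultiset (a, b, c) ↔
      [x, y, z] ∈ [a, b, c].permutations := by
    rw [List.mem_permutations, ← Multiset.coe_eq_coe]
    rfl
  simp [hperm, tripleRearrangements, List.permutations, List.permutationsAux,
    List.permutationsAux.rec]

theorem card_tripleRearrangements_add (t : α × α × α) :
    #(tripleRearrangements t) + 3 * #{s ∈ tripleRearrangements t | s.1 = s.2.1}
      + 2 * #{s ∈ tripleRearrangements t | s.1 = s.2.1 ∧ s.2.1 = s.2.2} = 6 := by
  obtain ⟨x, y, z⟩ := t
  by_cases hxy : x = y <;> by_cases hyz : y = z <;> by_cases hxz : x = z <;>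
    simp_all [tripleRearrangements, filter_insert, filter_singleton, card_insert_of_notMem,
      eq_comm]

theorem six_mul_card_image_tripleMultiset (X : Finset (α × α × α))
    (hX : ∀ s t, tripleMultiset s = tripleMultiset t → t ∈ X → s ∈ X) :
    6 * #(X.image tripleMultiset) = #X + 3 * #{t ∈ X | t.1 = t.2.1}
      + 2 * #{t ∈ X | t.1 = t.2.1 ∧ t.2.1 = t.2.2} := by
  have hmaps : Set.MapsTo tripleMultiset (X : Set (α × α × α))
      (X.image tripleMultiset : Set (Multiset α)) :=
    fun _ ht => mem_image_of_mem _ ht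
  have hsplit (p : α × α × α → Prop) [DecidablePred p] : #{t ∈ X | p t} =
      ∑ M ∈ X.image tripleMultiset, #{s ∈ {t ∈ X | tripleMultiset t = M} | p s} := by
    rw [card_eq_sum_card_fiberwise fun t ht => hmaps (mem_filter.1 ht).1]
    simp only [filter_filter, and_comm]
  rw [card_eq_sum_card_fiberwise hmaps, hsplit, hsplit, mul_sum, mul_sum, ← sum_add_distrib,
    ← sum_add_distrib, mul_comm, ← smul_eq_mul, ← sum_const]
  refine sum_congr rfl fun M hM => ?_
  obtain ⟨t, ht, rfl⟩ := mem_image.1 hM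
  have hfiber : {s ∈ X | tripleMultiset s = tripleMultiset t} = tripleRearrangements t := by
    ext s
    rw [mem_filter, ← tripleMultiset_eq_iff]
    exact ⟨And.right, fun h => ⟨hX s t h ht, h⟩⟩
  rw [hfiber, card_tripleRearrangements_add]

end OrbitCounting

theorem Finset.card_Ioo_add_two {α : Type*} [PartialOrder α] [LocallyFiniteOrder α] {a b : α}
    (h : a < b) : #(Ioo a b) + 2 = #(Icc a b) := by
  rw [Icc_eq_cons_Ico h.le, card_cons, Ico_eq_cons_Ioo h, card_cons]

theorem sum_Icc_zero_sub_add_one (n : ℕ) : ∑ i ∈ Icc 0 n, (n - i + 1) = (n + 2).choose 2 := by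
  have hreflect := sum_range_reflect (fun i => i + 1) (n + 1)
  rw [Nat.add_sub_cancel] at hreflect
  rw [← Nat.bot_eq_zero, Icc_bot, ← Nat.range_succ_eq_Iic, hreflect, Nat.choose_two_right,
    ← sum_range_id, sum_range_succ' _ (n + 1)]
  rfl

theorem card_Icc_zero_natProd (u : ℕ × ℕ) : #(Icc 0 u) = (u.1 + 1) * (u.2 + 1) := by
  simp [card_Icc_prod]

theorem sum_Icc_zero_card_Icc_zero_sub (w : ℕ × ℕ) :
    ∑ x ∈ Icc 0 w, #(Icc 0 (w - x)) = (w.1 + 2).choose 2 * (w.2 + 2).choose 2 := by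
  rw [Icc_prod_def 0 w, sum_product]
  simp only [card_Icc_zero_natProd, Prod.fst_sub, Prod.snd_sub, Prod.fst_zero, Prod.snd_zero]
  rw [← sum_mul_sum, sum_Icc_zero_sub_add_one, sum_Icc_zero_sub_add_one]

def nonzeroTriples (w : ℕ × ℕ) : Finset ((ℕ × ℕ) × (ℕ × ℕ) × (ℕ × ℕ)) :=
  {t ∈ Iic w ×ˢ Iic w ×ˢ Iic w | t.1 + t.2.1 + t.2.2 = w ∧ t.1 ≠ 0 ∧ t.2.1 ≠ 0 ∧ t.2.2 ≠ 0}

theorem mem_nonzeroTriples {w : ℕ × ℕ} {t : (ℕ × ℕ) × (ℕ × ℕ) × (ℕ × ℕ)} :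
    t ∈ nonzeroTriples w ↔ t.1 + t.2.1 + t.2.2 = w ∧ t.1 ≠ 0 ∧ t.2.1 ≠ 0 ∧ t.2.2 ≠ 0 := by
  obtain ⟨⟨x₁, x₂⟩, ⟨y₁, y₂⟩, ⟨z₁, z₂⟩⟩ := t
  obtain ⟨w₁, w₂⟩ := w
  simp only [nonzeroTriples, mem_filter, mem_product, mem_Iic, Prod.mk_le_mk, Prod.mk_add_mk,
    Prod.ext_iff, ne_eq, Prod.fst_zero, Prod.snd_zero]
  omega

theorem mem_nonzeroTriples_iff_tripleMultiset {w : ℕ × ℕ}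
    {t : (ℕ × ℕ) × (ℕ × ℕ) × (ℕ × ℕ)} :
    t ∈ nonzeroTriples w ↔ (∀ x ∈ tripleMultiset t, x ≠ 0) ∧ (tripleMultiset t).sum = w := by
  simp [mem_nonzeroTriples, tripleMultiset, add_assoc, and_comm]

theorem mem_image_tripleMultiset_nonzeroTriples {w : ℕ × ℕ} {M : Multiset (ℕ × ℕ)} :
    M ∈ (nonzeroTriples w).image tripleMultiset ↔
      Multiset.card M = 3 ∧ (∀ x ∈ M, x ≠ 0) ∧ M.sum = w := by
  constructor
  · intro hM
    obtain ⟨t, ht, rfl⟩ := mem_image.1 hM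
    exact ⟨rfl, mem_nonzeroTriples_iff_tripleMultiset.1 ht⟩
  · rintro ⟨hcard, hM⟩
    obtain ⟨x, y, z, rfl⟩ := Multiset.card_eq_three.1 hcard
    exact mem_image.2 ⟨(x, y, z), mem_nonzeroTriples_iff_tripleMultiset.2 hM, rfl⟩

theorem vectorPartitions2_three_eq_card_image (k l : ℕ) :
    vectorPartitions2 3 k l = #((nonzeroTriples (k, l)).image tripleMultiset) := by
  rw [vectorPartitions2, ← Nat.card_eq_finsetCard]
  exact Nat.card_congr
    (Equiv.subtypeEquivRight fun _ => mem_image_tripleMultiset_nonzeroTriples.symm)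

theorem six_mul_vectorPartitions2_three (k l : ℕ) :
    6 * vectorPartitions2 3 k l = #(nonzeroTriples (k, l))
      + 3 * #{t ∈ nonzeroTriples (k, l) | t.1 = t.2.1}
      + 2 * #{t ∈ nonzeroTriples (k, l) | t.1 = t.2.1 ∧ t.2.1 = t.2.2} := by
  rw [vectorPartitions2_three_eq_card_image]
  refine six_mul_card_image_tripleMultiset _ fun s t hst ht => ?_
  rw [mem_nonzeroTriples_iff_tripleMultiset, hst]
  exact mem_nonzeroTriples_iff_tripleMultiset.1 ht

theorem card_filter_fst_nonzeroTriples {w x : ℕ × ℕ} (hx : x ∈ Ioo 0 w) :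
    #{t ∈ nonzeroTriples w | t.1 = x} = #(Ioo 0 (w - x)) := by
  rw [mem_Ioo] at hx
  refine card_nbij' (fun t => t.2.1) (fun y => (x, y, w - x - y)) ?_ ?_ ?_ ?_ <;>
    intro t ht <;>
    simp only [coe_filter, mem_coe, Set.mem_ofPred_eq, mem_nonzeroTriples, mem_Ioo, Prod.lt_iff,
      Prod.ext_iff, Prod.fst_add, Prod.snd_add, Prod.fst_sub, Prod.snd_sub,
      Prod.fst_zero, Prod.snd_zero, ne_eq, and_true, true_and] at hx ht ⊢ <;>
    omega

theorem card_nonzeroTriples {w : ℕ × ℕ} (hw : w ≠ 0) :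
    #(nonzeroTriples w) + 3 * ((w.1 + 1) * (w.2 + 1))
      = (w.1 + 2).choose 2 * (w.2 + 2).choose 2 + 3 := by
  have hw : 0 < w := pos_iff_ne_zero.2 hw
  have hfibers : #(nonzeroTriples w) = ∑ x ∈ Ioo 0 w, #(Ioo 0 (w - x)) := by
    rw [card_eq_sum_card_fiberwise (f := Prod.fst) (t := Ioo 0 w)]
    · exact sum_congr rfl fun x hx => card_filter_fst_nonzeroTriples hx
    · intro t ht
      simp only [mem_coe, mem_nonzeroTriples, mem_Ioo, Prod.lt_iff, Prod.ext_iff, Prod.fst_add,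
        Prod.snd_add, Prod.fst_zero, Prod.snd_zero, ne_eq] at ht ⊢
      omega
  have hinner : ∑ x ∈ Ioo 0 w, #(Ioo 0 (w - x)) + 2 * #(Ioo 0 w)
      = ∑ x ∈ Ioo 0 w, #(Icc 0 (w - x)) := by
    rw [mul_comm, ← smul_eq_mul, ← sum_const, ← sum_add_distrib]
    exact sum_congr rfl fun x hx => card_Ioo_add_two (tsub_pos_of_lt (mem_Ioo.1 hx).2)
  have hends : ∑ x ∈ Icc 0 w, #(Icc 0 (w - x))
      = #(Icc 0 (w - 0)) + #(Icc 0 (w - w)) + ∑ x ∈ Ioo 0 w, #(Icc 0 (w - x)) := by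
    rw [Icc_eq_cons_Ico hw.le, sum_cons, Ico_eq_cons_Ioo hw, sum_cons]
    ring
  have hcard := card_Ioo_add_two hw
  rw [sum_Icc_zero_card_Icc_zero_sub, tsub_zero, tsub_self, card_Icc_zero_natProd,
    card_Icc_zero_natProd] at hends
  rw [card_Icc_zero_natProd] at hcard
  simp only [Prod.fst_zero, Prod.snd_zero] at hends
  omega

theorem card_filter_fst_eq_snd_nonzeroTriples {w : ℕ × ℕ} {s : Finset (ℕ × ℕ)}
    (hs : ∀ x, x ∈ s ↔ 0 < x ∧ x + x < w) :
    #{t ∈ nonzeroTriples w | t.1 = t.2.1} = #s := by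
  refine card_nbij' Prod.fst (fun x => (x, x, w - (x + x))) ?_ ?_ ?_ ?_ <;>
    intro t ht <;>
    simp only [coe_filter, mem_coe, Set.mem_ofPred_eq, hs, mem_nonzeroTriples, Prod.lt_iff,
      Prod.ext_iff, Prod.fst_add, Prod.snd_add, Prod.fst_sub, Prod.snd_sub, Prod.fst_zero,
      Prod.snd_zero, ne_eq, and_true, true_and] at ht ⊢ <;>
    omega

theorem card_filter_fst_eq_snd_nonzeroTriples_odd (a b : ℕ) :
    #{t ∈ nonzeroTriples (2 * a + 1, 2 * b + 1) | t.1 = t.2.1} + 1 = (a + 1) * (b + 1) := by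
  rw [card_filter_fst_eq_snd_nonzeroTriples (s := Ioc 0 (a, b)), ← card_Icc_zero_natProd (a, b),
    Icc_eq_cons_Ioc (by simp), card_cons]
  intro x
  simp only [mem_Ioc, Prod.lt_iff, Prod.le_def, Prod.fst_add, Prod.snd_add, Prod.fst_zero,
    Prod.snd_zero]
  omega

theorem card_filter_fst_eq_snd_nonzeroTriples_even {a b : ℕ} (h : (a, b) ≠ 0) :
    #{t ∈ nonzeroTriples (2 * a, 2 * b) | t.1 = t.2.1} + 2 = (a + 1) * (b + 1) := by
  rw [card_filter_fst_eq_snd_nonzeroTriples (s := Ioo 0 (a, b)),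
    card_Ioo_add_two (pos_iff_ne_zero.2 h), card_Icc_zero_natProd]
  intro x
  simp only [mem_Ioo, Prod.lt_iff, Prod.fst_add, Prod.snd_add, Prod.fst_zero, Prod.snd_zero]
  omega

theorem card_filter_all_eq_nonzeroTriples_le_one (w : ℕ × ℕ) :
    #{t ∈ nonzeroTriples w | t.1 = t.2.1 ∧ t.2.1 = t.2.2} ≤ 1 := by
  refine card_le_one.2 fun s hs t ht => ?_
  obtain ⟨⟨x₁, x₂⟩, ⟨y₁, y₂⟩, ⟨z₁, z₂⟩⟩ := s
  obtain ⟨⟨x₁', x₂'⟩, ⟨y₁', y₂'⟩, ⟨z₁', z₂'⟩⟩ := t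
  obtain ⟨w₁, w₂⟩ := w
  simp only [mem_filter, mem_nonzeroTriples, Prod.mk_add_mk, Prod.mk.injEq] at hs ht ⊢
  omega

theorem vectorPartitions2_three_strict_anti_general (k l : ℕ) (hkl : l ≤ k)
    (hk : Odd k) (hlodd : Odd l) (hne : (k, l) ≠ (1, 1)) :
    vectorPartitions2 3 (k + 1) (l - 1) < vectorPartitions2 3 k l := by
  obtain ⟨a, rfl⟩ := hk
  obtain ⟨b, rfl⟩ := hlodd
  have hba : b ≤ a := by omega
  have ha : 1 ≤ a := by
    contrapose! hne
    simp only [Prod.mk.injEq]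
    omega
  rw [show 2 * a + 1 + 1 = 2 * (a + 1) by ring, Nat.add_sub_cancel]
  have h6 := six_mul_vectorPartitions2_three (2 * a + 1) (2 * b + 1)
  have h6' := six_mul_vectorPartitions2_three (2 * (a + 1)) (2 * b)
  have hA := card_nonzeroTriples (w := (2 * a + 1, 2 * b + 1)) (by simp)
  have hA' := card_nonzeroTriples (w := (2 * (a + 1), 2 * b)) (by simp)
  have hB := card_filter_fst_eq_snd_nonzeroTriples_odd a b
  have hB' := card_filter_fst_eq_snd_nonzeroTriples_even (a := a + 1) (b := b) (by simp)
  have hC' := card_filter_all_eq_nonzeroTriples_le_one (2 * (a + 1), 2 * b)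
  have hchoose (n : ℕ) : (n + 2).choose 2 * 2 = (n + 2) * (n + 1) := by
    simpa using (Nat.add_one_mul_choose_eq (n + 1) 1).symm
  dsimp only at hA hA'
  -- the products of the `hchoose` instances turn `hA`, `hA'` into polynomial identities in `a, b`
  nlinarith [congrArg₂ (· * ·) (hchoose (2 * a + 1)) (hchoose (2 * b + 1)),
    congrArg₂ (· * ·) (hchoose (2 * (a + 1))) (hchoose (2 * b)),
    Nat.mul_le_mul hba (Nat.le_refl (a * b)), Nat.mul_le_mul ha (Nat.le_refl b)]

/-- For `k ≥ l ≥ 1` both odd with `(k,l) ≠ (1,1)`, `p₃(k,l) > p₃(k+1, l-1)`. -/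
theorem vectorPartitions2_three_strict_anti (k l : ℕ) (hl : 1 ≤ l) (hkl : l ≤ k)
    (hk : Odd k) (hlodd : Odd l) (hne : (k, l) ≠ (1, 1)) :
    vectorPartitions2 3 (k + 1) (l - 1) < vectorPartitions2 3 k l :=
  vectorPartitions2_three_strict_anti_general k l hkl hk hlodd hne
end
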